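/- For all t ∈ (0, π/2) and for all p ∈ (-∞,-1] ∪ [9,∞), the inequality sin t / t < (2p + (p+3)cos t)/((3p+1) + 2cos t) holds. -/

import Mathlib

/-!
Clearing the denominators, `t (2p + (p+3) cos t) - sin t ((3p+1) + 2 cos t)` is affine in `p` with
slope `t (2 + cos t) - 3 sin t`, which is positive by Cusa's inequality. At `p = 9` it equals
`2 (t (9 + 6 cos t) - sin t (14 + cos t)) > 0`, and at `p = -1` it equals
`-2 (1 - cos t) (t - sin t) < 0`, while the denominator is positive for `p ≥ 9` and negative for
`p ≤ -1`. The inequality at `p = 9` (which implies Cusa's) holds because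
`x ↦ x - sin x (14 + cos x) / (9 + 6 cos x)` has derivative `6 (1 - cos x)³ / (9 + 6 cos x)²`.
-/

open Real Set

lemma cos_lt_one_of_mem_Ioc {x : ℝ} (hx : x ∈ Ioc 0 π) : cos x < 1 := by
  simpa using cos_lt_cos_of_nonneg_of_le_pi le_rfl hx.2 hx.1

lemma hasDerivAt_sub_sin_mul_fourteen_add_cos_div (x : ℝ) :
    HasDerivAt (fun y => y - sin y * (14 + cos y) / (9 + 6 * cos y))
      (6 * (1 - cos x) ^ 3 / (9 + 6 * cos x) ^ 2) x := by
  have hden : 9 + 6 * cos x ≠ 0 := by linarith [neg_one_le_cos x]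
  refine ((hasDerivAt_id' x).sub (((hasDerivAt_sin x).mul ((hasDerivAt_cos x).const_add 14)).div
    (((hasDerivAt_cos x).const_mul 6).const_add 9) hden)).congr_deriv ?_
  rw [Pi.mul_apply, one_sub_div (pow_ne_zero 2 hden)]
  congr 1
  linear_combination (-75 : ℝ) * sin_sq_add_cos_sq x

lemma sin_mul_fourteen_add_cos_lt {t : ℝ} (ht : t ∈ Ioc 0 π) :
    sin t * (14 + cos t) < t * (9 + 6 * cos t) := by
  have hmono : StrictMonoOn (fun y => y - sin y * (14 + cos y) / (9 + 6 * cos y)) (Icc 0 π) := by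
    refine strictMonoOn_of_deriv_pos (convex_Icc 0 π) (fun x _ =>
      (hasDerivAt_sub_sin_mul_fourteen_add_cos_div x).continuousAt.continuousWithinAt) ?_
    intro x hx
    rw [interior_Icc] at hx
    rw [(hasDerivAt_sub_sin_mul_fourteen_add_cos_div x).deriv]
    have : 0 < 1 - cos x := sub_pos.2 (cos_lt_one_of_mem_Ioc (Ioo_subset_Ioc_self hx))
    have : 0 < 9 + 6 * cos x := by linarith [neg_one_le_cos x]
    positivity
  have hlt := hmono ⟨le_rfl, pi_pos.le⟩ (Ioc_subset_Icc_self ht) ht.1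
  simp only [sin_zero, cos_zero, zero_mul, zero_div, sub_zero, sub_pos] at hlt
  rwa [div_lt_iff₀ (by linarith [neg_one_le_cos t])] at hlt

lemma three_mul_sin_lt_mul_two_add_cos {t : ℝ} (ht : t ∈ Ioc 0 π) :
    3 * sin t < t * (2 + cos t) := by
  have key := sin_mul_fourteen_add_cos_lt ht
  have h14 : 0 < 14 + cos t := by linarith [neg_one_le_cos t]
  -- `3 (9 + 6 c) ≤ (2 + c) (14 + c)` is `(1 - c)² ≥ 0`
  nlinarith [mul_nonneg ht.1.le (sq_nonneg (1 - cos t))]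

theorem stmt5 (t p : ℝ) (ht : t ∈ Set.Ioo 0 (Real.pi/2)) (hp : p ≤ -1 ∨ 9 ≤ p) :
    Real.sin t / t < (2*p + (p+3)*Real.cos t) / ((3*p+1) + 2*Real.cos t) := by
  obtain ⟨ht0, htπ⟩ := ht
  have ht' : t ∈ Ioc 0 π := ⟨ht0, by linarith [pi_pos]⟩
  have hsin : sin t < t := sin_lt ht0
  have hcos : cos t < 1 := cos_lt_one_of_mem_Ioc ht'
  have cusa := three_mul_sin_lt_mul_two_add_cos ht'
  rcases hp with hp | hp
  · rw [← neg_div_neg_eq (2*p + _), div_lt_div_iff₀ ht0 (by linarith)]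
    nlinarith [mul_nonneg (by linarith : 0 ≤ -(p + 1)) (sub_pos.2 cusa).le,
      mul_pos (sub_pos.2 hcos) (sub_pos.2 hsin)]
  · rw [div_lt_div_iff₀ ht0 (by linarith [neg_one_le_cos t])]
    nlinarith [mul_nonneg (sub_nonneg.2 hp) (sub_pos.2 cusa).le, sin_mul_fourteen_add_cos_lt ht']
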